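/- For every μ ∈ ℂ and every ℓ ∈ ℕ, the following three-term relation holds in ℂ[t]: (μ+ℓ)·C̃_ℓ^μ(it) + C̃_{ℓ−2}^{μ+1}(it) = (μ + ⌊(ℓ+1)/2⌋)·C̃_ℓ^{μ+1}(it). -/
import Mathlib


noncomputable section

/-- The renormalized Gegenbauer polynomial `C̃_ℓ^μ(z)` (zero for `ℓ < 0`). -/
def GegenC (μ : ℂ) (l : ℤ) : Polynomial ℂ :=
  if l < 0 then 0 else
    ∑ k ∈ Finset.range (l.toNat / 2 + 1),
      Polynomial.C ((∏ r ∈ Finset.Ico ((l.toNat + 1) / 2) (l.toNat - k), (μ + (r : ℂ))) *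
          ((-1) ^ k / ((Nat.factorial k : ℂ) * (Nat.factorial (l.toNat - 2 * k) : ℂ)))) *
        (Polynomial.C 2 * Polynomial.X) ^ (l.toNat - 2 * k)

/-- `C̃_ℓ^μ(it)`, i.e. the substitution `z = it`. -/
def GegenIt (μ : ℂ) (l : ℤ) : Polynomial ℂ :=
  (GegenC μ l).comp (Polynomial.C Complex.I * Polynomial.X)

lemma prodShift (μ : ℂ) (a b : ℕ) :
    (∏ r ∈ Finset.Ico a b, (μ + 1 + (r : ℂ))) = ∏ r ∈ Finset.Ico (a + 1) (b + 1), (μ + (r : ℂ)) := by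
  rw [Finset.prod_Ico_eq_prod_range, Finset.prod_Ico_eq_prod_range]
  have h : b + 1 - (a + 1) = b - a := by omega
  rw [h]
  refine Finset.prod_congr rfl fun i _ => ?_
  push_cast
  ring

lemma auxC (x a y b : ℂ) (Z : Polynomial ℂ) (h : x * a = y * b) :
    Polynomial.C x * (Polynomial.C a * Z) = Polynomial.C y * (Polynomial.C b * Z) := by
  rw [← mul_assoc, ← Polynomial.C_mul, h, Polynomial.C_mul, mul_assoc]

lemma auxC2 (x a b y c : ℂ) (Z : Polynomial ℂ) (h : x * a + b = y * c) :
    Polynomial.C x * (Polynomial.C a * Z) + Polynomial.C b * Z =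
      Polynomial.C y * (Polynomial.C c * Z) := by
  rw [← mul_assoc, ← Polynomial.C_mul, ← add_mul, ← Polynomial.C_add, h,
    Polynomial.C_mul, mul_assoc]

lemma gegenKey (μ : ℂ) (l : ℕ) :
    Polynomial.C (μ + (l : ℂ)) * GegenC μ (l : ℤ) + GegenC (μ + 1) ((l : ℤ) - 2) =
      Polynomial.C (μ + (((l + 1) / 2 : ℕ) : ℂ)) * GegenC (μ + 1) (l : ℤ) := by
  match l with
  | 0 =>
    simp [GegenC, Finset.sum_range_succ]
  | 1 =>
    simp [GegenC, Finset.sum_range_succ]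
  | (n + 2) =>
    set l := n + 2 with hl
    have hl2 : 2 ≤ l := by omega
    have hnn : ¬ ((l : ℤ) < 0) := by omega
    have hnn2 : ¬ ((l : ℤ) - 2 < 0) := by omega
    have ht1 : ((l : ℤ)).toNat = l := by omega
    have ht2 : ((l : ℤ) - 2).toNat = l - 2 := by omega
    simp only [GegenC, if_neg hnn, if_neg hnn2, ht1, ht2]
    set m := (l + 1) / 2 with hm
    have hm2 : (l - 2 + 1) / 2 + 1 = m := by omega
    have hrange : (l - 2) / 2 + 1 = l / 2 := by omega
    rw [hrange]
    -- lift the middle sum to range (l/2 + 1)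
    set B : ℕ → Polynomial ℂ := fun j =>
      Polynomial.C ((∏ r ∈ Finset.Ico ((l - 2 + 1) / 2) (l - 2 - j), (μ + 1 + (r : ℂ))) *
          ((-1) ^ j / ((Nat.factorial j : ℂ) * (Nat.factorial (l - 2 - 2 * j) : ℂ)))) *
        (Polynomial.C 2 * Polynomial.X) ^ (l - 2 - 2 * j) with hB
    set D : ℕ → Polynomial ℂ := fun k => if k = 0 then 0 else B (k - 1) with hD
    have hBD : (∑ j ∈ Finset.range (l / 2), B j) = ∑ k ∈ Finset.range (l / 2 + 1), D k := by
      rw [Finset.sum_range_succ']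
      simp [hD]
    rw [hBD, Finset.mul_sum, Finset.mul_sum, ← Finset.sum_add_distrib]
    refine Finset.sum_congr rfl fun k hk => ?_
    have hkle : k ≤ l / 2 := by
      have := Finset.mem_range.mp hk; omega
    match k with
    | 0 =>
      simp only [hD, if_pos rfl, add_zero]
      apply auxC
      have hshift := prodShift μ m l
      have hbot : (∏ r ∈ Finset.Ico m (l + 1), (μ + (r : ℂ))) =
          (μ + (m : ℂ)) * ∏ r ∈ Finset.Ico (m + 1) (l + 1), (μ + (r : ℂ)) :=
        Finset.prod_eq_prod_Ico_succ_bot (by omega) _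
      have htop : (∏ r ∈ Finset.Ico m (l + 1), (μ + (r : ℂ))) =
          (∏ r ∈ Finset.Ico m l, (μ + (r : ℂ))) * (μ + (l : ℂ)) :=
        Finset.prod_Ico_succ_top (by omega) _
      have key : (μ + (m : ℂ)) * ∏ r ∈ Finset.Ico (m + 1) (l + 1), (μ + (r : ℂ)) =
          (∏ r ∈ Finset.Ico m l, (μ + (r : ℂ))) * (μ + (l : ℂ)) := by
        rw [← hbot, htop]
      simp only [Nat.sub_zero, Nat.mul_zero]
      rw [hshift]
      conv_rhs => rw [← mul_assoc, key]
      ring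
    | (j + 1) =>
      have hj : 2 * (j + 1) ≤ l := by omega
      simp only [hD, Nat.add_sub_cancel, if_neg (Nat.succ_ne_zero j), hB]
      have hexp : l - 2 - 2 * j = l - 2 * (j + 1) := by omega
      rw [hexp]
      apply auxC2
      -- identify the middle product with Q
      have hmid : (∏ r ∈ Finset.Ico ((l - 2 + 1) / 2) (l - 2 - j), (μ + 1 + (r : ℂ))) =
          ∏ r ∈ Finset.Ico m (l - (j + 1)), (μ + (r : ℂ)) := by
        rw [prodShift, hm2, show l - 2 - j + 1 = l - (j + 1) from by omega]
      -- the RHS product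
      have hrhs : (∏ r ∈ Finset.Ico m (l - (j + 1)), (μ + 1 + (r : ℂ))) =
          ∏ r ∈ Finset.Ico (m + 1) (l - j), (μ + (r : ℂ)) := by
        rw [prodShift, show l - (j + 1) + 1 = l - j from by omega]
      have hbot : (∏ r ∈ Finset.Ico m (l - j), (μ + (r : ℂ))) =
          (μ + (m : ℂ)) * ∏ r ∈ Finset.Ico (m + 1) (l - j), (μ + (r : ℂ)) :=
        Finset.prod_eq_prod_Ico_succ_bot (by omega) _
      have htop : (∏ r ∈ Finset.Ico m (l - j), (μ + (r : ℂ))) =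
          (∏ r ∈ Finset.Ico m (l - (j + 1)), (μ + (r : ℂ))) * (μ + ((l - (j + 1) : ℕ) : ℂ)) := by
        have h1 : l - j = (l - (j + 1)) + 1 := by omega
        rw [h1]
        exact Finset.prod_Ico_succ_top (by omega) _
      have key : (μ + (m : ℂ)) * ∏ r ∈ Finset.Ico (m + 1) (l - j), (μ + (r : ℂ)) =
          (∏ r ∈ Finset.Ico m (l - (j + 1)), (μ + (r : ℂ))) * (μ + ((l - (j + 1) : ℕ) : ℂ)) := by
        rw [← hbot, htop]
      have hcast : ((l - (j + 1) : ℕ) : ℂ) = (l : ℂ) - (j : ℂ) - 1 := by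
        push_cast [Nat.cast_sub (by omega : j + 1 ≤ l)]
        ring
      rw [hmid, hrhs]
      conv_rhs => rw [← mul_assoc, key]
      rw [hcast, Nat.factorial_succ]
      have hf1 : ((Nat.factorial j : ℂ)) ≠ 0 := Nat.cast_ne_zero.mpr (Nat.factorial_ne_zero j)
      have hf2 : ((Nat.factorial (l - 2 * (j + 1)) : ℂ)) ≠ 0 :=
        Nat.cast_ne_zero.mpr (Nat.factorial_ne_zero _)
      have hf3 : ((j : ℂ) + 1) ≠ 0 := by
        intro h
        have h2 : ((j : ℂ) + 1) = ((j + 1 : ℕ) : ℂ) := by push_cast; ring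
        rw [h2] at h
        exact (Nat.cast_ne_zero.mpr (Nat.succ_ne_zero j)) h
      push_cast
      field_simp
      ring

/-- three-term relation for renormalized Gegenbauer polynomials. -/
theorem statement18 (μ : ℂ) (l : ℕ) :
    Polynomial.C (μ + (l : ℂ)) * GegenIt μ (l : ℤ) + GegenIt (μ + 1) ((l : ℤ) - 2) =
      Polynomial.C (μ + (((l + 1) / 2 : ℕ) : ℂ)) * GegenIt (μ + 1) (l : ℤ) := by
  have h := congrArg (fun p => p.comp (Polynomial.C Complex.I * Polynomial.X)) (gegenKey μ l)
  simpa [GegenIt, Polynomial.add_comp, Polynomial.mul_comp, Polynomial.C_comp] using h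

end
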